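/- Let n ≥ 1, let L₂, …, Lₙ be Kripke complete monomodal logics, and let L = T × L₂ × … × Lₙ. Then there is a function mapping each n-modal formula φ to an n-modal formula containing only the single propositional variable p, namely φ ↦ (A → σ(φ)) where A and σ are defined from φ, such that: (i) φ ∈ L if and only if A → σ(φ) ∈ L, and (ii) the length of A → σ(φ) is bounded by an exponential function of the length of φ. In other words, L is exponentially embeddable into its one-variable fragment. (Theorem 3.3) -/

import Mathlib

namespace ModalProducts

/-- `N`-modal formulas over propositional variables indexed by `ℕ`
(the variable `pₖ` is `var k`; the extra variable `p` is `var 0`). -/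
inductive MF (N : ℕ) : Type
  | var : ℕ → MF N
  | bot : MF N
  | and : MF N → MF N → MF N
  | or  : MF N → MF N → MF N
  | imp : MF N → MF N → MF N
  | box : Fin N → MF N → MF N
deriving DecidableEq

namespace MF

variable {N : ℕ}

/-- negation: `¬ψ = ψ → ⊥`. -/
def neg (φ : MF N) : MF N := imp φ bot

/-- diamond: `◇ᵢψ = ¬□ᵢ¬ψ`. -/
def dia (i : Fin N) (φ : MF N) : MF N := neg (box i (neg φ))

/-- modal depth. -/
def md : MF N → ℕ
  | var _ => 0
  | bot => 0
  | and φ ψ => max (md φ) (md ψ)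
  | or φ ψ => max (md φ) (md ψ)
  | imp φ ψ => max (md φ) (md ψ)
  | box _ φ => md φ + 1

/-- length (number of symbols; the variable `pₖ` counts as `k+1` symbols,
accounting for the subscript). -/
def len : MF N → ℕ
  | var q => q + 1
  | bot => 1
  | and φ ψ => len φ + len ψ + 1
  | or φ ψ => len φ + len ψ + 1
  | imp φ ψ => len φ + len ψ + 1
  | box _ φ => len φ + 1

/-- the set of propositional variables occurring in a formula. -/
def vars : MF N → Set ℕ
  | var q => {q}
  | bot => ∅
  | and φ ψ => vars φ ∪ vars ψ
  | or φ ψ => vars φ ∪ vars ψ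
  | imp φ ψ => vars φ ∪ vars ψ
  | box _ φ => vars φ

/-- the largest index of a variable occurring in a formula (0 if none). -/
def maxVar : MF N → ℕ
  | var q => q
  | bot => 0
  | and φ ψ => max (maxVar φ) (maxVar ψ)
  | or φ ψ => max (maxVar φ) (maxVar ψ)
  | imp φ ψ => max (maxVar φ) (maxVar ψ)
  | box _ φ => maxVar φ

/-- the list of subformulas of a formula. -/
def subfs : MF N → List (MF N)
  | var q => [var q]
  | bot => [bot]
  | and φ ψ => and φ ψ :: (subfs φ ++ subfs ψ)
  | or φ ψ => or φ ψ :: (subfs φ ++ subfs ψ)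
  | imp φ ψ => imp φ ψ :: (subfs φ ++ subfs ψ)
  | box i φ => box i φ :: subfs φ

/-- uniform substitution of formulas for variables. -/
def subst (s : ℕ → MF N) : MF N → MF N
  | var q => s q
  | bot => bot
  | and φ ψ => and (subst s φ) (subst s ψ)
  | or φ ψ => or (subst s φ) (subst s ψ)
  | imp φ ψ => imp (subst s φ) (subst s ψ)
  | box i φ => box i (subst s φ)

end MF

/-- `θ` is a subformula of `φ`. -/
def Subformula {N : ℕ} (θ φ : MF N) : Prop := θ ∈ φ.subfs

/-- A Kripke `N`-frame: a nonempty set of points with `N` accessibility relations. -/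
structure Frame (N : ℕ) where
  W : Type
  nonempty : Nonempty W
  R : Fin N → W → W → Prop

/-- Truth of a formula at a point of a frame under a valuation. -/
def Sat {N : ℕ} (F : Frame N) (v : ℕ → Set F.W) : F.W → MF N → Prop
  | x, .var q => x ∈ v q
  | _, .bot => False
  | x, .and φ ψ => Sat F v x φ ∧ Sat F v x ψ
  | x, .or φ ψ => Sat F v x φ ∨ Sat F v x ψ
  | x, .imp φ ψ => Sat F v x φ → Sat F v x ψ
  | x, .box i φ => ∀ y, F.R i x y → Sat F v y φ

/-- Validity of a formula in a frame: truth at every point under every valuation. -/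
def Valid {N : ℕ} (F : Frame N) (φ : MF N) : Prop := ∀ (v : ℕ → Set F.W) (x : F.W), Sat F v x φ

/-- A set of formulas is valid in a frame if all of its members are. -/
def ValidSet {N : ℕ} (F : Frame N) (L : Set (MF N)) : Prop := ∀ φ ∈ L, Valid F φ

/-- The logic of a class of frames. -/
def Logic {N : ℕ} (C : Set (Frame N)) : Set (MF N) := {φ | ∀ F ∈ C, Valid F φ}

/-- A logic is Kripke complete if it is the logic of some nonempty class of frames. -/
def KripkeComplete {N : ℕ} (L : Set (MF N)) : Prop :=
  ∃ C : Set (Frame N), C.Nonempty ∧ L = Logic C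

/-- The product of `N` 1-frames. -/
def prodFrame {N : ℕ} (Fs : Fin N → Frame 1) : Frame N where
  W := ∀ i, (Fs i).W
  nonempty := ⟨fun i => (Fs i).nonempty.some⟩
  R := fun i x y => (Fs i).R 0 (x i) (y i) ∧ ∀ k, k ≠ i → x k = y k

/-- The product of `N` Kripke complete monomodal logics: the logic of the class of
products of frames of the factors. -/
def productLogic {N : ℕ} (Ls : Fin N → Set (MF 1)) : Set (MF N) :=
  Logic {F | ∃ Fs : Fin N → Frame 1, (∀ i, ValidSet (Fs i) (Ls i)) ∧ F = prodFrame Fs}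

/-- A 1-frame is reflexive. -/
def ReflexiveFrame (F : Frame 1) : Prop := ∀ x, F.R 0 x x

/-- The logic `T` of all reflexive 1-frames. -/
def logicT : Set (MF 1) := Logic {F | ReflexiveFrame F}

/-- The logic `K` of all 1-frames. -/
def logicK : Set (MF 1) := Logic Set.univ

/-- The logic `S5` of all 1-frames whose relation is an equivalence. -/
def logicS5 : Set (MF 1) := Logic {F | Equivalence (F.R 0)}

section Translation

variable {n : ℕ}

/-- the variable `p`. -/
def pv : MF (n+1) := .var 0

/-- `◆₁ψ = ◇₁(¬p ∧ ◇₁(p ∧ ψ))`. -/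
def blackDia (ψ : MF (n+1)) : MF (n+1) :=
  MF.dia 0 (.and (MF.neg pv) (MF.dia 0 (.and pv ψ)))

/-- `α_k = ◆₁ᵏ □₁ p`. -/
def alphaF (k : ℕ) : MF (n+1) := blackDia^[k] (.box 0 pv)

/-- `β_k = ¬p ∧ ◇₁(p ∧ α_k)`. -/
def betaF (k : ℕ) : MF (n+1) := .and (MF.neg pv) (MF.dia 0 (.and pv (alphaF k)))

/-- `B = β_{m+1}`. -/
def Bf (m : ℕ) : MF (n+1) := betaF (m+1)

/-- The translation `σ`: `σ(p_k) = β_k`, `σ(⊥) = ⊥`, `σ` commutes with `∧, ∨, →`,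
and `σ(□ᵢψ) = □ᵢ(B → σ(ψ))`. -/
def sigmaT (m : ℕ) : MF (n+1) → MF (n+1)
  | .var k => betaF k
  | .bot => .bot
  | .and φ ψ => .and (sigmaT m φ) (sigmaT m ψ)
  | .or φ ψ => .or (sigmaT m φ) (sigmaT m ψ)
  | .imp φ ψ => .imp (sigmaT m φ) (sigmaT m ψ)
  | .box i φ => .box i (.imp (Bf m) (sigmaT m φ))

/-- conjunction of a head formula with a list of formulas. -/
def bigAnd (ψ : MF (n+1)) (l : List (MF (n+1))) : MF (n+1) := l.foldl .and ψ

/-- `□^{≤k}`: `□^{≤0}ψ = ψ`, `□^{≤k+1}ψ = □^{≤k}ψ ∧ □₁□^{≤k}ψ ∧ … ∧ □ₙ□^{≤k}ψ`. -/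
def boxLe : ℕ → MF (n+1) → MF (n+1)
  | 0, ψ => ψ
  | k+1, ψ => bigAnd (boxLe k ψ) (List.ofFn fun i : Fin (n+1) => .box i (boxLe k ψ))

/-- `□₋₁^{≤k}`: like `□^{≤k}` but using only `□₂, …, □ₙ`. -/
def boxLeTail : ℕ → MF (n+1) → MF (n+1)
  | 0, ψ => ψ
  | k+1, ψ => bigAnd (boxLeTail k ψ) (List.ofFn fun i : Fin n => .box i.succ (boxLeTail k ψ))

/-- `◇₋₁^{≤k}ψ = ¬□₋₁^{≤k}¬ψ`. -/
def diaLeTail (k : ℕ) (ψ : MF (n+1)) : MF (n+1) := MF.neg (boxLeTail k (MF.neg ψ))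

/-- `A = B ∧ □^{≤md φ}(B → □₋₁^{≤md φ}B) ∧ □^{≤md φ}(◇₋₁^{≤md φ}B → B)`. -/
def Af (m : ℕ) (φ : MF (n+1)) : MF (n+1) :=
  .and (Bf m)
    (.and (boxLe φ.md (.imp (Bf m) (boxLeTail φ.md (Bf m))))
          (boxLe φ.md (.imp (diaLeTail φ.md (Bf m)) (Bf m))))

end Translation

end ModalProducts

open ModalProducts

/-!
`σ` relativises every box to `B`, and `A` forces `B` to behave, within `md φ` steps of the
evaluation point, like a property of the first coordinate alone.

If `φ` is valid, take a product model of `A` at `r` and cut the first (reflexive) relation down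
to the points where `B` holds. This is again a frame for `T × L₂ × … × Lₙ`, and once `pₖ` is read
as `βₖ`, `σ ψ` and `ψ` agree at the `B`-points near `r`.

Conversely, given a countermodel of `φ`, hang above every point `x` of the first factor chains
`x → a₀ → b₁ → a₁ → ⋯ → bₜ → aₜ` whose points `aⱼ` carry `p` exactly when the chain is marked.
Then `αₖ` holds at `aⱼ` iff `j + k = t`, so `βₖ` holds at `x` iff the chain of length `k` is
marked. Marking the chain of length `m + 1` always, and the chain of length `k ≤ m` iff `pₖ`
holds, makes `B` true exactly at the old points and `βₖ` agree with `pₖ` there; so `A` holds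
and `σ φ` fails.

`σ φ` has length `O(m · |φ|)` and `A` has length `(n+2)^(2 md φ) · O(m)`, which is exponential.
-/

namespace ModalProducts

def ReachWithin {α : Type*} (S : α → α → Prop) : ℕ → α → α → Prop
  | 0 => Eq
  | k + 1 => fun a b => ReachWithin S k a b ∨ ∃ w, S a w ∧ ReachWithin S k w b

namespace ReachWithin

variable {α : Type*} {S : α → α → Prop}

theorem refl : ∀ (k : ℕ) (a : α), ReachWithin S k a a
  | 0, _ => rfl
  | k + 1, a => Or.inl (refl k a)

theorem mono {k k' : ℕ} {a b : α} (h : k ≤ k') (hr : ReachWithin S k a b) :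
    ReachWithin S k' a b := by
  induction h with
  | refl => exact hr
  | step _ ih => exact Or.inl ih

theorem head {k : ℕ} {a w b : α} (hs : S a w) (hr : ReachWithin S k w b) :
    ReachWithin S (k + 1) a b :=
  Or.inr ⟨w, hs, hr⟩

theorem map {β : Type*} {S' : β → β → Prop} (f : α → β) (hS : ∀ a b, S a b → S' (f a) (f b)) :
    ∀ {k : ℕ} {a b : α}, ReachWithin S k a b → ReachWithin S' k (f a) (f b)
  | 0, _, _, h => congrArg f h
  | _ + 1, _, _, Or.inl h => Or.inl (map f hS h)
  | _ + 1, _, _, Or.inr ⟨w, hw, h⟩ => Or.inr ⟨f w, hS _ _ hw, map f hS h⟩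

theorem apply_eq {β : Sort*} {f : α → β} (hS : ∀ a b, S a b → f a = f b) :
    ∀ {k : ℕ} {a b : α}, ReachWithin S k a b → f a = f b
  | 0, _, _, h => congrArg f h
  | _ + 1, _, _, Or.inl h => apply_eq hS h
  | _ + 1, _, _, Or.inr ⟨_, hw, h⟩ => (hS _ _ hw).trans (apply_eq hS h)

theorem forall_iff {P : ℕ → α → Prop} (hsucc : ∀ k a, P (k + 1) a ↔ P k a ∧ ∀ b, S a b → P k b) :
    ∀ (k : ℕ) (a : α), P k a ↔ ∀ b, ReachWithin S k a b → P 0 b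
  | 0, a => ⟨fun h b hb => hb ▸ h, fun h => h a rfl⟩
  | k + 1, a => by
    rw [hsucc, forall_iff hsucc k]
    simp only [ReachWithin, or_imp, forall_and, forall_exists_index, and_imp]
    exact and_congr_right fun _ => ⟨fun h b w hw hb => (forall_iff hsucc k w).1 (h w hw) b hb,
      fun h w hw => (forall_iff hsucc k w).2 fun b => h b w hw⟩

end ReachWithin

def StepAll {N : ℕ} (F : Frame N) (a b : F.W) : Prop := ∃ i, F.R i a b

/-- A step along one of `R₂, …, Rₙ`, which carry the indices `1, …, n` of `Fin (n+1)`. -/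
def StepTail {n : ℕ} (F : Frame (n+1)) (a b : F.W) : Prop := ∃ i : Fin n, F.R i.succ a b

section Semantics

variable {N n : ℕ}

@[simp] theorem sat_var {F : Frame N} {v : ℕ → Set F.W} {x : F.W} {q : ℕ} :
    Sat F v x (.var q) ↔ x ∈ v q := Iff.rfl

theorem sat_neg {F : Frame N} {v : ℕ → Set F.W} {x : F.W} {φ : MF N} :
    Sat F v x (MF.neg φ) ↔ ¬ Sat F v x φ := Iff.rfl

variable {F : Frame (n+1)} {v : ℕ → Set F.W}

theorem sat_bigAnd {x : F.W} (l : List (MF (n+1))) (ψ : MF (n+1)) :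
    Sat F v x (bigAnd ψ l) ↔ Sat F v x ψ ∧ ∀ χ ∈ l, Sat F v x χ := by
  induction l generalizing ψ with
  | nil => simp [bigAnd]
  | cons a l ih =>
    rw [bigAnd, List.foldl_cons, ← bigAnd, ih]
    simp only [Sat, List.mem_cons, forall_eq_or_imp, and_assoc]

theorem sat_bigAnd_ofFn_box {k : ℕ} (f : Fin k → Fin (n+1)) (x : F.W) (ψ : MF (n+1)) :
    Sat F v x (bigAnd ψ (List.ofFn fun i => .box (f i) ψ)) ↔
      Sat F v x ψ ∧ ∀ i y, F.R (f i) x y → Sat F v y ψ := by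
  simp only [sat_bigAnd, List.mem_ofFn, forall_exists_index, forall_apply_eq_imp_iff, Sat]

theorem sat_boxLe {ψ : MF (n+1)} (k : ℕ) (x : F.W) :
    Sat F v x (boxLe k ψ) ↔ ∀ y, ReachWithin (StepAll F) k x y → Sat F v y ψ :=
  ReachWithin.forall_iff (P := fun k x => Sat F v x (boxLe k ψ)) (fun k x => by
    simp only [boxLe, sat_bigAnd_ofFn_box, StepAll, forall_exists_index]
    exact and_congr_right fun _ => forall_comm) k x

theorem sat_boxLeTail {ψ : MF (n+1)} (k : ℕ) (x : F.W) :
    Sat F v x (boxLeTail k ψ) ↔ ∀ y, ReachWithin (StepTail F) k x y → Sat F v y ψ :=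
  ReachWithin.forall_iff (P := fun k x => Sat F v x (boxLeTail k ψ)) (fun k x => by
    simp only [boxLeTail, sat_bigAnd_ofFn_box, StepTail, forall_exists_index]
    exact and_congr_right fun _ => forall_comm) k x

theorem sat_diaLeTail {ψ : MF (n+1)} {k : ℕ} {x : F.W} :
    Sat F v x (diaLeTail k ψ) ↔ ∃ y, ReachWithin (StepTail F) k x y ∧ Sat F v y ψ := by
  simp only [diaLeTail, sat_neg, sat_boxLeTail, not_forall, not_not, exists_prop]

end Semantics

section Vars

variable {n : ℕ}

theorem alphaF_succ (k : ℕ) : (alphaF (k+1) : MF (n+1)) = blackDia (alphaF k) :=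
  Function.iterate_succ_apply' _ _ _

theorem vars_bigAnd_subset {s : Set ℕ} (l : List (MF (n+1))) {ψ : MF (n+1)} (hψ : ψ.vars ⊆ s)
    (hl : ∀ χ ∈ l, χ.vars ⊆ s) : (bigAnd ψ l).vars ⊆ s := by
  induction l generalizing ψ with
  | nil => exact hψ
  | cons a l ih =>
    simp only [List.mem_cons, forall_eq_or_imp] at hl
    exact ih (Set.union_subset hψ hl.1) hl.2

theorem vars_boxLe_subset {s : Set ℕ} {ψ : MF (n+1)} (hψ : ψ.vars ⊆ s) (k : ℕ) :
    (boxLe k ψ).vars ⊆ s := by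
  induction k with
  | zero => exact hψ
  | succ k ih => exact vars_bigAnd_subset _ ih (by simp [MF.vars, ih])

theorem vars_boxLeTail_subset {s : Set ℕ} {ψ : MF (n+1)} (hψ : ψ.vars ⊆ s) (k : ℕ) :
    (boxLeTail k ψ).vars ⊆ s := by
  induction k with
  | zero => exact hψ
  | succ k ih => exact vars_bigAnd_subset _ ih (by simp [MF.vars, ih])

theorem vars_alphaF (k : ℕ) : (alphaF k : MF (n+1)).vars ⊆ {0} := by
  induction k with
  | zero => simp [alphaF, pv, MF.vars]
  | succ k ih => simpa [alphaF_succ, blackDia, MF.dia, MF.neg, pv, MF.vars] using ih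

theorem vars_betaF (k : ℕ) : (betaF k : MF (n+1)).vars ⊆ {0} := by
  simpa [betaF, MF.dia, MF.neg, pv, MF.vars] using vars_alphaF k

theorem vars_sigmaT (m : ℕ) (φ : MF (n+1)) : (sigmaT m φ).vars ⊆ {0} := by
  induction φ with
  | var k => exact vars_betaF k
  | bot => exact Set.empty_subset _
  | and _ _ ih₁ ih₂ | or _ _ ih₁ ih₂ | imp _ _ ih₁ ih₂ => exact Set.union_subset ih₁ ih₂
  | box _ _ ih => exact Set.union_subset (vars_betaF _) ih

theorem vars_Af (m : ℕ) (φ : MF (n+1)) : (Af m φ).vars ⊆ {0} := by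
  have hB : (Bf m : MF (n+1)).vars ⊆ {0} := vars_betaF _
  have hnB : (MF.neg (Bf m) : MF (n+1)).vars ⊆ {0} := by simpa [MF.neg, MF.vars] using hB
  refine Set.union_subset hB (Set.union_subset ?_ ?_) <;> refine vars_boxLe_subset ?_ _
  · exact Set.union_subset hB (vars_boxLeTail_subset hB _)
  · have hdia : (diaLeTail φ.md (Bf m) : MF (n+1)).vars ⊆ {0} := by
      simpa [diaLeTail, MF.neg, MF.vars] using vars_boxLeTail_subset hnB φ.md
    exact Set.union_subset hdia hB

end Vars

section Length

variable {n : ℕ}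

theorem md_le_len (φ : MF (n+1)) : φ.md ≤ φ.len := by
  induction φ <;> simp only [MF.md, MF.len] <;> omega

theorem maxVar_lt_len (φ : MF (n+1)) : φ.maxVar < φ.len := by
  induction φ <;> simp only [MF.maxVar, MF.len] <;> omega

theorem mem_vars_le_maxVar {φ : MF (n+1)} {q : ℕ} (hq : q ∈ φ.vars) : q ≤ φ.maxVar := by
  induction φ with
  | var => exact le_of_eq hq
  | bot => exact hq.elim
  | and _ _ ih₁ ih₂ | or _ _ ih₁ ih₂ | imp _ _ ih₁ ih₂ =>
    exact hq.elim (fun h => (ih₁ h).trans (le_max_left _ _))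
      fun h => (ih₂ h).trans (le_max_right _ _)
  | box _ _ ih => exact ih hq

theorem len_alphaF (k : ℕ) : (alphaF k : MF (n+1)).len = 16 * k + 2 := by
  induction k with
  | zero => rfl
  | succ k ih => simp only [alphaF_succ, blackDia, MF.dia, MF.neg, pv, MF.len, ih]; ring

theorem len_betaF (k : ℕ) : (betaF k : MF (n+1)).len = 16 * k + 13 := by
  simp only [betaF, MF.dia, MF.neg, pv, MF.len, len_alphaF]; ring

theorem len_sigmaT_le (m : ℕ) (φ : MF (n+1)) : (sigmaT m φ).len ≤ (16 * m + 31) * φ.len := by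
  induction φ with
  | var k => simp only [sigmaT, MF.len, len_betaF]; nlinarith
  | bot => simp only [sigmaT, MF.len]; omega
  | and _ _ ih₁ ih₂ | or _ _ ih₁ ih₂ | imp _ _ ih₁ ih₂ => simp only [sigmaT, MF.len]; nlinarith
  | box _ _ ih => simp only [sigmaT, Bf, MF.len, len_betaF]; nlinarith

theorem len_bigAnd (l : List (MF (n+1))) (ψ : MF (n+1)) :
    (bigAnd ψ l).len = ψ.len + (l.map fun χ => χ.len + 1).sum := by
  induction l generalizing ψ with
  | nil => simp [bigAnd]
  | cons χ l ih => rw [bigAnd, List.foldl_cons, ← bigAnd, ih]; simp [MF.len]; ring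

theorem len_bigAnd_ofFn_box {k : ℕ} (f : Fin k → Fin (n+1)) (ψ : MF (n+1)) :
    (bigAnd ψ (List.ofFn fun i => .box (f i) ψ)).len + 2 = (k + 1) * (ψ.len + 2) := by
  simp only [len_bigAnd, List.map_ofFn, Function.comp_def, MF.len, List.sum_ofFn,
    Finset.sum_const, Finset.card_univ, Fintype.card_fin, smul_eq_mul]
  ring

theorem len_boxLe (k : ℕ) (ψ : MF (n+1)) : (boxLe k ψ).len + 2 = (n+2)^k * (ψ.len + 2) := by
  induction k with
  | zero => simp [boxLe]
  | succ k ih => rw [boxLe, len_bigAnd_ofFn_box, ih, pow_succ]; ring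

theorem len_boxLeTail (k : ℕ) (ψ : MF (n+1)) :
    (boxLeTail k ψ).len + 2 = (n+1)^k * (ψ.len + 2) := by
  induction k with
  | zero => simp [boxLeTail]
  | succ k ih => rw [boxLeTail, len_bigAnd_ofFn_box, ih, pow_succ]; ring

theorem len_Af_le (m : ℕ) (φ : MF (n+1)) :
    (Af m φ).len ≤ (n+2)^φ.md * (n+2)^φ.md * (80 * m + 155) := by
  have h₁ := len_boxLeTail φ.md (Bf m : MF (n+1))
  have h₂ := len_boxLeTail φ.md (MF.neg (Bf m) : MF (n+1))
  have h₃ := len_boxLe φ.md (.imp (Bf m) (boxLeTail φ.md (Bf m)) : MF (n+1))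
  have h₄ := len_boxLe φ.md (.imp (diaLeTail φ.md (Bf m)) (Bf m) : MF (n+1))
  simp only [Af, diaLeTail, MF.neg, MF.len] at h₁ h₂ h₃ h₄ ⊢
  have hQP : (n+1)^φ.md ≤ (n+2)^φ.md := Nat.pow_le_pow_left (by omega) _
  generalize (n+1)^φ.md = Q at h₁ h₂ hQP
  have hP : 1 ≤ (n+2)^φ.md := Nat.one_le_pow _ _ (by omega)
  generalize (n+2)^φ.md = P at *
  rw [Bf, len_betaF] at *
  nlinarith [congrArg (P * ·) h₁, congrArg (P * ·) h₂, Nat.mul_le_mul_left P hQP,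
    Nat.mul_le_mul_left P hP]

theorem len_translation_le (m : ℕ) (φ : MF (n+1)) (hm : m < φ.len) :
    (MF.imp (Af m φ) (sigmaT m φ)).len ≤ (1024 * (n+2)^2) ^ φ.len := by
  set L := φ.len
  have hPL : (n+2)^φ.md ≤ (n+2)^L := Nat.pow_le_pow_right (by omega) (md_le_len φ)
  have hP : 1 ≤ (n+2)^φ.md := Nat.one_le_pow _ _ (by omega)
  have hL : 187 * L^2 ≤ 1024^L := calc
    187 * L^2 ≤ 256^L * (2^L)^2 := by
      gcongr
      · exact (by norm_num : 187 ≤ 256).trans (le_self_pow₀ (by norm_num) (by omega))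
      · exact Nat.lt_two_pow_self.le
    _ = 1024^L := by rw [← pow_mul, mul_comm L, pow_mul, ← mul_pow]; norm_num
  have hbody : (MF.imp (Af m φ) (sigmaT m φ)).len ≤ (n+2)^φ.md * (n+2)^φ.md * (187 * L^2) := by
    have hA := len_Af_le m φ
    have hσ := len_sigmaT_le m φ
    have h₁ : 80 * m + 155 ≤ 155 * L := by omega
    have h₂ : (16 * m + 31) * L ≤ 31 * L^2 := by nlinarith
    have h₃ : 155 * L + 31 * L^2 + 1 ≤ 187 * L^2 := by nlinarith
    have hP2 : 1 ≤ (n+2)^φ.md * (n+2)^φ.md := Nat.one_le_iff_ne_zero.2 (by positivity)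
    simp only [MF.len]
    nlinarith [Nat.mul_le_mul_left ((n+2)^φ.md * (n+2)^φ.md) h₁,
      Nat.mul_le_mul_left ((n+2)^φ.md * (n+2)^φ.md) h₃]
  calc (MF.imp (Af m φ) (sigmaT m φ)).len
      ≤ (n+2)^L * (n+2)^L * 1024^L := hbody.trans (by gcongr)
    _ = (1024 * (n+2)^2) ^ L := by rw [mul_pow, ← pow_mul, mul_comm 2, pow_mul, sq]; ring

end Length

section Product

variable {n : ℕ} {Fs : Fin (n+1) → Frame 1}

def withHead (z : (prodFrame Fs).W) (a : (Fs 0).W) : (prodFrame Fs).W := Fin.cons a (Fin.tail z)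

@[simp] theorem withHead_self (z : (prodFrame Fs).W) : withHead z (z 0) = z := Fin.cons_self_tail z

theorem prodFrame_ext {z w : (prodFrame Fs).W} (h₀ : z 0 = w 0) (hτ : Fin.tail z = Fin.tail w) :
    z = w := by
  funext i
  rcases Fin.eq_zero_or_eq_succ i with rfl | ⟨j, rfl⟩
  exacts [h₀, congrFun hτ j]

theorem prodFrame_R_zero_iff {z w : (prodFrame Fs).W} :
    (prodFrame Fs).R 0 z w ↔ (Fs 0).R 0 (z 0) (w 0) ∧ Fin.tail z = Fin.tail w := by
  refine and_congr_right fun _ => ⟨fun h => funext fun j => h j.succ j.succ_ne_zero, ?_⟩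
  intro h k hk
  obtain ⟨j, rfl⟩ := Fin.exists_succ_eq.2 hk
  exact congrFun h j

theorem prodFrame_R_succ_iff {j : Fin n} {z w : (prodFrame Fs).W} :
    (prodFrame Fs).R j.succ z w ↔
      z 0 = w 0 ∧ (prodFrame (Fin.tail Fs)).R j (Fin.tail z) (Fin.tail w) := by
  refine ⟨fun h => ⟨h.2 0 (Fin.succ_ne_zero j).symm, h.1, fun k hk => h.2 k.succ ?_⟩, ?_⟩
  · exact fun e => hk (Fin.succ_injective _ e)
  · rintro ⟨h₀, h₁, h₂⟩
    refine ⟨h₁, fun k hk => ?_⟩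
    rcases Fin.eq_zero_or_eq_succ k with rfl | ⟨k, rfl⟩
    · exact h₀
    · exact h₂ k fun e => hk (e ▸ rfl)

theorem stepTail_iff {z w : (prodFrame Fs).W} :
    StepTail (prodFrame Fs) z w ↔
      z 0 = w 0 ∧ StepAll (prodFrame (Fin.tail Fs)) (Fin.tail z) (Fin.tail w) := by
  simp only [StepTail, StepAll, prodFrame_R_succ_iff, exists_and_left]

theorem sat_box_zero_iff {v : ℕ → Set (prodFrame Fs).W} {z : (prodFrame Fs).W} {ψ : MF (n+1)} :
    Sat (prodFrame Fs) v z (.box 0 ψ) ↔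
      ∀ a, (Fs 0).R 0 (z 0) a → Sat (prodFrame Fs) v (withHead z a) ψ := by
  refine ⟨fun h a ha => h _ (prodFrame_R_zero_iff.2 ⟨ha, rfl⟩), fun h w hw => ?_⟩
  rw [prodFrame_R_zero_iff] at hw
  have hw' : withHead z (w 0) = w := by rw [← withHead_self w]; exact congrArg (Fin.cons _) hw.2
  exact hw' ▸ h (w 0) hw.1

theorem sat_dia_zero_iff {v : ℕ → Set (prodFrame Fs).W} {z : (prodFrame Fs).W} {ψ : MF (n+1)} :
    Sat (prodFrame Fs) v z (MF.dia 0 ψ) ↔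
      ∃ a, (Fs 0).R 0 (z 0) a ∧ Sat (prodFrame Fs) v (withHead z a) ψ := by
  simp [MF.dia, sat_neg, sat_box_zero_iff]

theorem reachWithin_head_tail {k : ℕ} {z z' : (prodFrame Fs).W}
    (h : ReachWithin (StepAll (prodFrame Fs)) k z z') :
    ReachWithin ((Fs 0).R 0) k (z 0) (z' 0) ∧
      ReachWithin (StepAll (prodFrame (Fin.tail Fs))) k (Fin.tail z) (Fin.tail z') := by
  induction k generalizing z with
  | zero => subst h; exact ⟨rfl, rfl⟩
  | succ k ih =>
    rcases h with h | ⟨w, ⟨i, hzw⟩, hw⟩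
    · exact (ih h).imp Or.inl Or.inl
    obtain ⟨h₀, hτ⟩ := ih hw
    rcases Fin.eq_zero_or_eq_succ i with rfl | ⟨j, rfl⟩
    · obtain ⟨hR, hτw⟩ := prodFrame_R_zero_iff.1 hzw
      exact ⟨.head hR h₀, Or.inl (hτw ▸ hτ)⟩
    · obtain ⟨h₀w, hR⟩ := prodFrame_R_succ_iff.1 hzw
      exact ⟨Or.inl (h₀w ▸ h₀), .head ⟨j, hR⟩ hτ⟩

theorem reachWithin_withHead {k : ℕ} (z : (prodFrame Fs).W) {a b : (Fs 0).W}
    (h : ReachWithin ((Fs 0).R 0) k a b) :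
    ReachWithin (StepAll (prodFrame Fs)) k (withHead z a) (withHead z b) :=
  h.map (withHead z) fun _ _ hab => ⟨0, prodFrame_R_zero_iff.2 ⟨hab, rfl⟩⟩

theorem reachWithin_stepTail {k : ℕ} {z z' : (prodFrame Fs).W} (h₀ : z 0 = z' 0)
    (h : ReachWithin (StepAll (prodFrame (Fin.tail Fs))) k (Fin.tail z) (Fin.tail z')) :
    ReachWithin (StepTail (prodFrame Fs)) k z z' := by
  have : ReachWithin (StepTail (prodFrame Fs)) k (withHead z (z 0)) (withHead z' (z 0)) :=
    h.map (fun t => (Fin.cons (z 0) t : (prodFrame Fs).W)) fun _ _ hR => stepTail_iff.2 ⟨rfl, hR⟩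
  rwa [withHead_self, h₀, withHead_self] at this

theorem head_eq_of_reachWithin_stepTail {k : ℕ} {z z' : (prodFrame Fs).W}
    (h : ReachWithin (StepTail (prodFrame Fs)) k z z') : z 0 = z' 0 :=
  ReachWithin.apply_eq (fun _ _ hs => (stepTail_iff.1 hs).1) h

end Product

/-- Relativisation: if `h` is a bisimulation between `G` and the `B`-points of `F`, for `k` more
steps from points with `good k`, then `σ` reads truth in `G` off `F`. -/
theorem sat_sigmaT_iff {n m : ℕ} {F G : Frame (n+1)} {v : ℕ → Set F.W} {u : ℕ → Set G.W}
    (h : G.W → F.W) (good : ℕ → G.W → Prop)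
    (φ : MF (n+1)) (hvar : ∀ k x, ∀ q ∈ φ.vars, good k x → (Sat F v (h x) (betaF q) ↔ x ∈ u q))
    (hforth : ∀ k x i y, good (k+1) x → G.R i x y →
      F.R i (h x) (h y) ∧ Sat F v (h y) (Bf m) ∧ good k y)
    (hback : ∀ k x i y', good (k+1) x → F.R i (h x) y' → Sat F v y' (Bf m) →
      ∃ y, h y = y' ∧ G.R i x y ∧ good k y)
    {k : ℕ} {x : G.W} (hx : good k x) (hk : φ.md ≤ k) :
    Sat F v (h x) (sigmaT m φ) ↔ Sat G u x φ := by
  induction φ generalizing k x with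
  | var q => exact hvar k x q rfl hx
  | bot => exact Iff.rfl
  | and φ ψ ihφ ihψ | or φ ψ ihφ ihψ | imp φ ψ ihφ ihψ =>
    have h₁ := ihφ (fun k x q hq => hvar k x q (.inl hq)) hx (le_of_max_le_left hk)
    have h₂ := ihψ (fun k x q hq => hvar k x q (.inr hq)) hx (le_of_max_le_right hk)
    simp only [sigmaT, Sat, h₁, h₂]
  | box i φ ih =>
    rcases k with _ | k
    · exact absurd hk (by simp [MF.md])
    have hk : φ.md ≤ k := by simpa [MF.md] using hk
    constructor
    · intro hσ y hxy
      obtain ⟨hR, hB, hy⟩ := hforth k x i y hx hxy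
      exact (ih hvar hy hk).1 (hσ (h y) hR hB)
    · intro hφ y' hR hB
      obtain ⟨y, rfl, hxy, hy⟩ := hback k x i y' hx hR hB
      exact (ih hvar hy hk).2 (hφ y hxy)

section Factors

variable {n : ℕ}

theorem reflexive_of_validSet_logicT {F : Frame 1} (h : ValidSet F logicT) : ReflexiveFrame F := by
  have hT : MF.imp (.box 0 (.var 0)) (.var 0) ∈ logicT := fun G hG v y hb => hb y (hG y)
  exact fun x => h _ hT (fun _ => {y | F.R 0 x y}) x fun _ hy => hy

theorem validSet_logicT_of_reflexive {F : Frame 1} (h : ReflexiveFrame F) : ValidSet F logicT :=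
  fun _ hψ => hψ F h

theorem validSet_factors {Fs : Fin (n+1) → Frame 1} {Ls : Fin n → Set (MF 1)}
    (h₀ : ReflexiveFrame (Fs 0)) (hs : ∀ j, ValidSet (Fs j.succ) (Ls j)) (i : Fin (n+1)) :
    ValidSet (Fs i) (Fin.cases (motive := fun _ => Set (MF 1)) logicT Ls i) := by
  rcases Fin.eq_zero_or_eq_succ i with rfl | ⟨j, rfl⟩
  · exact validSet_logicT_of_reflexive h₀
  · exact hs j

/-- Only the relations change, so `prodFrame (restrictHead Fs P)` has the points of
`prodFrame Fs`, and `restrictHead Fs P j.succ` is `Fs j.succ` by definition. -/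
def restrictHead (Fs : Fin (n+1) → Frame 1) (P : (Fs 0).W → Prop) : Fin (n+1) → Frame 1 :=
  fun i => ⟨(Fs i).W, (Fs i).nonempty, fun i₀ =>
    Fin.cases (motive := fun i => (Fs i).W → (Fs i).W → Prop)
      (Relation.ReflGen fun a b => (Fs 0).R i₀ a b ∧ P a ∧ P b) (fun j => (Fs j.succ).R i₀) i⟩

end Factors

section HardDirection

variable {n : ℕ}

theorem sat_iff_sat_withHead {Fs : Fin (n+1) → Frame 1} {v : ℕ → Set (prodFrame Fs).W}
    {r z : (prodFrame Fs).W} {d : ℕ} {ψ : MF (n+1)}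
    (h₂ : Sat (prodFrame Fs) v r (boxLe d (.imp ψ (boxLeTail d ψ))))
    (h₃ : Sat (prodFrame Fs) v r (boxLe d (.imp (diaLeTail d ψ) ψ)))
    (hz : ReachWithin (StepAll (prodFrame Fs)) d r z) :
    Sat (prodFrame Fs) v z ψ ↔ Sat (prodFrame Fs) v (withHead r (z 0)) ψ := by
  obtain ⟨h₀, hτ⟩ := reachWithin_head_tail hz
  have hry : ReachWithin (StepAll (prodFrame Fs)) d r (withHead r (z 0)) := by
    simpa using reachWithin_withHead r h₀
  have hyz : ReachWithin (StepTail (prodFrame Fs)) d (withHead r (z 0)) z :=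
    reachWithin_stepTail rfl hτ
  rw [sat_boxLe] at h₂ h₃
  exact ⟨fun hψ => h₃ _ hry (sat_diaLeTail.2 ⟨z, hyz, hψ⟩),
    fun hψ => (sat_boxLeTail _ _).1 (h₂ _ hry hψ) z hyz⟩

variable {Fs : Fin (n+1) → Frame 1} {v : ℕ → Set (prodFrame Fs).W} {ψ : MF (n+1)}
  {P : (Fs 0).W → Prop}

def HeadDetermined (v : ℕ → Set (prodFrame Fs).W) (ψ : MF (n+1)) (P : (Fs 0).W → Prop) (k : ℕ)
    (z : (prodFrame Fs).W) : Prop :=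
  Sat (prodFrame Fs) v z ψ ∧
    ∀ z', ReachWithin (StepAll (prodFrame Fs)) k z z' → (Sat (prodFrame Fs) v z' ψ ↔ P (z' 0))

namespace HeadDetermined

variable {k : ℕ} {z : (prodFrame Fs).W}

theorem head (hz : HeadDetermined v ψ P k z) : P (z 0) :=
  (hz.2 z (.refl k z)).1 hz.1

theorem mono {k' : ℕ} (hz : HeadDetermined v ψ P k' z) (hk : k ≤ k') : HeadDetermined v ψ P k z :=
  ⟨hz.1, fun z' hz' => hz.2 z' (hz'.mono hk)⟩

theorem step {i : Fin (n+1)} {z' : (prodFrame Fs).W} (hz : HeadDetermined v ψ P (k+1) z)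
    (hzz' : (prodFrame Fs).R i z z') :
    (Sat (prodFrame Fs) v z' ψ ↔ P (z' 0)) ∧ (P (z' 0) → HeadDetermined v ψ P k z') :=
  have hψ := hz.2 z' (.head ⟨i, hzz'⟩ (.refl k z'))
  ⟨hψ, fun hP => ⟨hψ.2 hP, fun y hy => hz.2 y (.head ⟨i, hzz'⟩ hy)⟩⟩

theorem restrictHead_forth (hrefl : ReflexiveFrame (Fs 0)) {i : Fin (n+1)}
    {y : (prodFrame Fs).W} (hz : HeadDetermined v ψ P (k+1) z)
    (hzy : (prodFrame (restrictHead Fs P)).R i z y) :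
    (prodFrame Fs).R i z y ∧ Sat (prodFrame Fs) v y ψ ∧ HeadDetermined v ψ P k y := by
  rcases Fin.eq_zero_or_eq_succ i with rfl | ⟨j, rfl⟩
  · obtain ⟨h₀, hτ⟩ := prodFrame_R_zero_iff.1 hzy
    rcases (Relation.reflGen_iff _ _ _).1 h₀ with h₀ | ⟨hR, -, hPy⟩
    · obtain rfl : y = z := prodFrame_ext h₀ hτ.symm
      exact ⟨prodFrame_R_zero_iff.2 ⟨hrefl _, rfl⟩, hz.1, hz.mono k.le_succ⟩
    · have hzy' : (prodFrame Fs).R 0 z y := prodFrame_R_zero_iff.2 ⟨hR, hτ⟩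
      obtain ⟨hψy, hgood⟩ := hz.step hzy'
      exact ⟨hzy', hψy.2 hPy, hgood hPy⟩
  · obtain ⟨hψy, hgood⟩ := hz.step hzy
    have hPy : P (y 0) := (prodFrame_R_succ_iff.1 hzy).1 ▸ hz.head
    exact ⟨hzy, hψy.2 hPy, hgood hPy⟩

theorem restrictHead_back {i : Fin (n+1)} {y : (prodFrame Fs).W}
    (hz : HeadDetermined v ψ P (k+1) z) (hzy : (prodFrame Fs).R i z y)
    (hy : Sat (prodFrame Fs) v y ψ) :
    (prodFrame (restrictHead Fs P)).R i z y ∧ HeadDetermined v ψ P k y := by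
  obtain ⟨hψy, hgood⟩ := hz.step hzy
  refine ⟨?_, hgood (hψy.1 hy)⟩
  rcases Fin.eq_zero_or_eq_succ i with rfl | ⟨j, rfl⟩
  · obtain ⟨hR, hτ⟩ := prodFrame_R_zero_iff.1 hzy
    exact prodFrame_R_zero_iff.2 ⟨.single ⟨hR, hz.head, hψy.1 hy⟩, hτ⟩
  · exact hzy

end HeadDetermined

theorem translation_mem_productLogic {Ls : Fin n → Set (MF 1)} {φ : MF (n+1)} (m : ℕ)
    (h : φ ∈ productLogic (Fin.cases (motive := fun _ => Set (MF 1)) logicT Ls)) :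
    MF.imp (Af m φ) (sigmaT m φ) ∈
      productLogic (Fin.cases (motive := fun _ => Set (MF 1)) logicT Ls) := by
  rintro _ ⟨Fs, hFs, rfl⟩ v r ⟨hB, h₂, h₃⟩
  let P (a : (Fs 0).W) : Prop := Sat (prodFrame Fs) v (withHead r a) (Bf m)
  have hrefl : ReflexiveFrame (Fs 0) := reflexive_of_validSet_logicT (hFs 0)
  have hφ : Sat (prodFrame (restrictHead Fs P)) (fun q => {z | Sat (prodFrame Fs) v z (betaF q)})
      r φ :=
    h _ ⟨restrictHead Fs P, validSet_factors (fun _ => .refl) (fun j => hFs j.succ), rfl⟩ _ r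
  exact (sat_sigmaT_iff (F := prodFrame Fs) (G := prodFrame (restrictHead Fs P)) id
    (HeadDetermined (Fs := Fs) v (Bf m) P) φ
    (fun _ _ _ _ _ => Iff.rfl) (fun _ _ _ _ hz hzy => hz.restrictHead_forth hrefl hzy)
    (fun _ _ _ y hz hzy hy => ⟨y, rfl, hz.restrictHead_back hzy hy⟩)
    (k := φ.md) ⟨hB, fun _ => sat_iff_sat_withHead h₂ h₃⟩ le_rfl).2 hφ

end HardDirection

/-- `pos x t j` and `neg x t j` are the `p`- and `¬p`-points at height `j` of the chain of
length `t` above `x`. -/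
inductive ChainPoint (W : Type) : Type
  | base : W → ChainPoint W
  | pos : W → ℕ → ℕ → ChainPoint W
  | neg : W → ℕ → ℕ → ChainPoint W

inductive ChainStep {W : Type} (R : W → W → Prop) : ChainPoint W → ChainPoint W → Prop
  | base {x y : W} : R x y → ChainStep R (.base x) (.base y)
  | enter (x : W) (t : ℕ) : ChainStep R (.base x) (.pos x t 0)
  | down {x : W} {t j : ℕ} : j < t → ChainStep R (.pos x t j) (.neg x t (j+1))
  | up {x : W} {t j : ℕ} : j < t → ChainStep R (.neg x t (j+1)) (.pos x t (j+1))

section Chain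

open Relation

variable {W : Type} {R : W → W → Prop}

theorem reflGen_chainStep_base_iff {x : W} {c : ChainPoint W} :
    ReflGen (ChainStep R) (.base x) c ↔
      c = .base x ∨ (∃ y, c = .base y ∧ R x y) ∨ ∃ t, c = .pos x t 0 := by
  rw [reflGen_iff]
  constructor
  · rintro (rfl | h)
    · exact .inl rfl
    cases h with
    | base h => exact .inr (.inl ⟨_, rfl, h⟩)
    | enter => exact .inr (.inr ⟨_, rfl⟩)
  · rintro (rfl | ⟨y, rfl, h⟩ | ⟨t, rfl⟩)
    exacts [.inl rfl, .inr (.base h), .inr (.enter x t)]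

theorem reflGen_chainStep_pos_iff {x : W} {t j : ℕ} {c : ChainPoint W} :
    ReflGen (ChainStep R) (.pos x t j) c ↔ c = .pos x t j ∨ (c = .neg x t (j+1) ∧ j < t) := by
  rw [reflGen_iff]
  constructor
  · rintro (rfl | h)
    · exact .inl rfl
    cases h with
    | down h => exact .inr ⟨rfl, h⟩
  · rintro (rfl | ⟨rfl, h⟩)
    exacts [.inl rfl, .inr (.down h)]

theorem reflGen_chainStep_neg_iff {x : W} {t j : ℕ} {c : ChainPoint W} :
    ReflGen (ChainStep R) (.neg x t j) c ↔
      c = .neg x t j ∨ (c = .pos x t j ∧ 0 < j ∧ j ≤ t) := by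
  rw [reflGen_iff]
  constructor
  · rintro (rfl | h)
    · exact .inl rfl
    cases h with
    | up h => exact .inr ⟨rfl, Nat.succ_pos _, h⟩
  · rintro (rfl | ⟨rfl, h₀, h⟩)
    · exact .inl rfl
    · obtain ⟨j, rfl⟩ := Nat.exists_eq_succ_of_ne_zero h₀.ne'
      exact .inr (.up h)

end Chain

def chainFrame (F : Frame 1) : Frame 1 :=
  ⟨ChainPoint F.W, ⟨.base F.nonempty.some⟩, fun _ => Relation.ReflGen (ChainStep (F.R 0))⟩

section ChainProduct

variable {n : ℕ} (Hs : Fin (n+1) → Frame 1)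

def chainFactors : Fin (n+1) → Frame 1 := Fin.cases (chainFrame (Hs 0)) fun j => Hs j.succ

variable {Hs} (u : ℕ → Set (prodFrame Hs).W) (m : ℕ)

/-- Whether the chain of length `t` above the point `Fin.cons x τ` carries `p`. -/
def ChainActive (x : (Hs 0).W) (τ : ∀ j : Fin n, (Hs j.succ).W) (t : ℕ) : Prop :=
  t = m + 1 ∨ (t ≤ m ∧ (Fin.cons x τ : (prodFrame Hs).W) ∈ u t)

/-- Only `p` occurs in the translation, so every variable is given the marking. -/
def chainVal : ℕ → Set (prodFrame (chainFactors Hs)).W := fun _ z =>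
  match (z 0 : ChainPoint (Hs 0).W) with
  | .pos x t _ => ChainActive u m x (Fin.tail z) t
  | _ => False

variable {u m}

@[simp] theorem withHead_pos_mem_chainVal {z : (prodFrame (chainFactors Hs)).W} {x : (Hs 0).W}
    {t j q : ℕ} :
    withHead z (ChainPoint.pos x t j) ∈ chainVal u m q ↔ ChainActive u m x (Fin.tail z) t :=
  Iff.rfl

@[simp] theorem withHead_base_notMem_chainVal {z : (prodFrame (chainFactors Hs)).W}
    {x : (Hs 0).W} {q : ℕ} : withHead z (ChainPoint.base x) ∉ chainVal u m q :=
  id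

@[simp] theorem withHead_neg_notMem_chainVal {z : (prodFrame (chainFactors Hs)).W}
    {x : (Hs 0).W} {t j q : ℕ} : withHead z (ChainPoint.neg x t j) ∉ chainVal u m q :=
  id

local notation "Ch" => prodFrame (chainFactors Hs)

theorem sat_box_zero_chain_iff {v : ℕ → Set (Ch).W} {z : (Ch).W} {c : ChainPoint (Hs 0).W}
    {ψ : MF (n+1)} : Sat Ch v (withHead z c) (.box 0 ψ) ↔
      ∀ c', Relation.ReflGen (ChainStep ((Hs 0).R 0)) c c' → Sat Ch v (withHead z c') ψ :=
  sat_box_zero_iff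

theorem sat_dia_zero_chain_iff {v : ℕ → Set (Ch).W} {z : (Ch).W} {c : ChainPoint (Hs 0).W}
    {ψ : MF (n+1)} : Sat Ch v (withHead z c) (MF.dia 0 ψ) ↔
      ∃ c', Relation.ReflGen (ChainStep ((Hs 0).R 0)) c c' ∧ Sat Ch v (withHead z c') ψ :=
  sat_dia_zero_iff

theorem sat_alphaF_chain {z : (Ch).W} {x : (Hs 0).W} {t : ℕ}
    (hact : ChainActive u m x (Fin.tail z) t) (k : ℕ) {j : ℕ} (hj : j ≤ t) :
    Sat Ch (chainVal u m) (withHead z (.pos x t j)) (alphaF k) ↔ j + k = t := by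
  induction k generalizing j with
  | zero =>
    simp only [alphaF, Function.iterate_zero, id, sat_box_zero_chain_iff,
      reflGen_chainStep_pos_iff, forall_eq_or_imp, and_imp, forall_eq, pv, sat_var,
      withHead_pos_mem_chainVal, withHead_neg_notMem_chainVal, hact, true_and, imp_false, not_lt]
    omega
  | succ k ih =>
    simp only [alphaF_succ, blackDia, sat_dia_zero_chain_iff, reflGen_chainStep_pos_iff,
      reflGen_chainStep_neg_iff, exists_eq_or_imp, and_assoc, exists_eq_left, pv, Sat, sat_neg,
      withHead_pos_mem_chainVal, withHead_neg_notMem_chainVal, hact, not_true_eq_false, false_and,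
      not_false_eq_true, true_and, false_or, Nat.succ_pos]
    constructor
    · rintro ⟨-, hj', hα⟩
      have := (ih hj').1 hα
      omega
    · intro h
      exact ⟨by omega, by omega, (ih (by omega)).2 (by omega)⟩

theorem sat_Bf_chain {z : (Ch).W} (c : ChainPoint (Hs 0).W) :
    Sat Ch (chainVal u m) (withHead z c) (Bf m) ↔ ∃ x, c = .base x := by
  rcases c with x | ⟨x, t, j⟩ | ⟨x, t, j⟩
  · have hact : ChainActive u m x (Fin.tail z) (m + 1) := .inl rfl
    refine iff_of_true ⟨withHead_base_notMem_chainVal, sat_dia_zero_chain_iff.2 ?_⟩ ⟨x, rfl⟩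
    exact ⟨.pos x (m+1) 0, .single (.enter x _), hact,
      (sat_alphaF_chain hact (m+1) (Nat.zero_le _)).2 (zero_add _)⟩
  all_goals
    refine iff_of_false (fun ⟨hnp, hdia⟩ => ?_) (by simp)
    obtain ⟨c, hc, hp, hα⟩ := sat_dia_zero_chain_iff.1 hdia
  · rcases reflGen_chainStep_pos_iff.1 hc with rfl | ⟨rfl, -⟩
    exacts [hnp hp, withHead_neg_notMem_chainVal hp]
  · rcases reflGen_chainStep_neg_iff.1 hc with rfl | ⟨rfl, hj, hjt⟩
    · exact withHead_neg_notMem_chainVal hp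
    · have := (sat_alphaF_chain hp (m+1) hjt).1 hα
      rcases hp with h | ⟨h, -⟩ <;> omega

theorem sat_betaF_chain {z : (Ch).W} {x : (Hs 0).W} {q : ℕ} (hq : q ≤ m) :
    Sat Ch (chainVal u m) (withHead z (.base x)) (betaF q) ↔
      (Fin.cons x (Fin.tail z) : (prodFrame Hs).W) ∈ u q := by
  constructor
  · rintro ⟨-, hdia⟩
    obtain ⟨c, hc, hp, hα⟩ := sat_dia_zero_chain_iff.1 hdia
    rcases reflGen_chainStep_base_iff.1 hc with rfl | ⟨y, rfl, -⟩ | ⟨t, rfl⟩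
    · exact (withHead_base_notMem_chainVal hp).elim
    · exact (withHead_base_notMem_chainVal hp).elim
    · obtain rfl : q = t := by simpa using (sat_alphaF_chain hp q (Nat.zero_le t)).1 hα
      rcases hp with h | ⟨-, h⟩
      exacts [absurd h (by omega), h]
  · intro hu
    have hact : ChainActive u m x (Fin.tail z) q := .inr ⟨hq, hu⟩
    exact ⟨withHead_base_notMem_chainVal, sat_dia_zero_chain_iff.2 ⟨.pos x q 0,
      .single (.enter x q), hact, (sat_alphaF_chain hact q (Nat.zero_le q)).2 (zero_add q)⟩⟩

theorem sat_Bf_chain_iff (z : (Ch).W) :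
    Sat Ch (chainVal u m) z (Bf m) ↔ ∃ x, (z 0 : ChainPoint (Hs 0).W) = .base x := by
  have := sat_Bf_chain (u := u) (m := m) (z := z) (z 0)
  rw [withHead_self] at this
  exact this

def toChain (x : (prodFrame Hs).W) : (Ch).W := Fin.cons (ChainPoint.base (x 0)) (Fin.tail x)

theorem sat_betaF_toChain {x : (prodFrame Hs).W} {q : ℕ} (hq : q ≤ m) :
    Sat Ch (chainVal u m) (toChain x) (betaF q) ↔ x ∈ u q := by
  have := sat_betaF_chain (u := u) (z := toChain x) (x := x 0) hq
  rwa [show (Fin.cons (x 0) (Fin.tail (toChain x)) : (prodFrame Hs).W) = x from withHead_self x]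
    at this

theorem toChain_R_iff (hrefl : ReflexiveFrame (Hs 0)) {i : Fin (n+1)}
    {x y : (prodFrame Hs).W} : (Ch).R i (toChain x) (toChain y) ↔ (prodFrame Hs).R i x y := by
  rcases Fin.eq_zero_or_eq_succ i with rfl | ⟨j, rfl⟩
  · rw [prodFrame_R_zero_iff, prodFrame_R_zero_iff]
    refine and_congr ?_ Iff.rfl
    change Relation.ReflGen _ (ChainPoint.base (x 0)) (ChainPoint.base (y 0)) ↔ _
    simp only [reflGen_chainStep_base_iff, ChainPoint.base.injEq, exists_eq_left', reduceCtorEq,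
      exists_false, or_false]
    exact or_iff_right_of_imp fun h => h ▸ hrefl _
  · rw [prodFrame_R_succ_iff, prodFrame_R_succ_iff]
    exact and_congr ⟨fun h => ChainPoint.base.inj h, congrArg ChainPoint.base⟩ Iff.rfl

theorem exists_toChain_eq {z : (Ch).W} {x : (Hs 0).W}
    (hz : (z 0 : ChainPoint (Hs 0).W) = .base x) : ∃ y, toChain y = z :=
  ⟨Fin.cons x (Fin.tail z), show withHead z (.base x) = z by rw [← hz]; exact withHead_self z⟩

end ChainProduct

theorem sat_Af_of_sat_Bf {n m : ℕ} {Fs : Fin (n+1) → Frame 1} {v : ℕ → Set (prodFrame Fs).W}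
    (hB : ∀ z z' : (prodFrame Fs).W, z 0 = z' 0 →
      (Sat (prodFrame Fs) v z (Bf m) ↔ Sat (prodFrame Fs) v z' (Bf m)))
    (φ : MF (n+1)) {z : (prodFrame Fs).W} (hz : Sat (prodFrame Fs) v z (Bf m)) :
    Sat (prodFrame Fs) v z (Af m φ) := by
  refine ⟨hz, (sat_boxLe _ _).2 fun y _ hy => ?_, (sat_boxLe _ _).2 fun y _ hy => ?_⟩
  · exact (sat_boxLeTail _ _).2 fun y' hyy' =>
      (hB y y' (head_eq_of_reachWithin_stepTail hyy')).1 hy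
  · obtain ⟨y', hyy', hy'⟩ := sat_diaLeTail.1 hy
    exact (hB y y' (head_eq_of_reachWithin_stepTail hyy')).2 hy'

theorem mem_productLogic_of_translation_mem {n m : ℕ} {Ls : Fin n → Set (MF 1)} {φ : MF (n+1)}
    (hφ : ∀ q ∈ φ.vars, q ≤ m)
    (h : MF.imp (Af m φ) (sigmaT m φ) ∈
      productLogic (Fin.cases (motive := fun _ => Set (MF 1)) logicT Ls)) :
    φ ∈ productLogic (Fin.cases (motive := fun _ => Set (MF 1)) logicT Ls) := by
  rintro _ ⟨Hs, hHs, rfl⟩ u w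
  have hrefl := reflexive_of_validSet_logicT (hHs 0)
  have hB := sat_Bf_chain_iff (u := u) (m := m)
  have hA : Sat (prodFrame (chainFactors Hs)) (chainVal u m) (toChain w) (Af m φ) :=
    sat_Af_of_sat_Bf (fun z z' h₀ => by rw [hB, hB, h₀]) φ ((hB _).2 ⟨w 0, rfl⟩)
  have hσ := h _ ⟨chainFactors Hs, validSet_factors (fun _ => .refl) (fun j => hHs j.succ), rfl⟩
    (chainVal u m) (toChain w) hA
  refine (sat_sigmaT_iff toChain (fun _ _ => True) φ
    (fun _ _ q hq _ => sat_betaF_toChain (hφ q hq)) ?_ ?_ trivial le_rfl).1 hσ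
  · exact fun _ _ _ y _ hxy => ⟨(toChain_R_iff hrefl).2 hxy, (hB _).2 ⟨y 0, rfl⟩, trivial⟩
  · intro _ _ _ y' _ hR hBy
    obtain ⟨b, hb⟩ := (hB y').1 hBy
    obtain ⟨y, rfl⟩ := exists_toChain_eq hb
    exact ⟨y, rfl, (toChain_R_iff hrefl).1 hR, trivial⟩

end ModalProducts

theorem products_with_T_theorem_3_3_general (n : ℕ) (Ls : Fin n → Set (MF 1)) :
    ∃ c : ℕ, ∀ φ : MF (n+1), (∀ q ∈ φ.vars, 1 ≤ q) →
      (MF.imp (Af φ.maxVar φ) (sigmaT φ.maxVar φ)).vars ⊆ {0} ∧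
      (φ ∈ productLogic (Fin.cases (motive := fun _ => Set (MF 1)) logicT Ls) ↔
        MF.imp (Af φ.maxVar φ) (sigmaT φ.maxVar φ) ∈
          productLogic (Fin.cases (motive := fun _ => Set (MF 1)) logicT Ls)) ∧
      (MF.imp (Af φ.maxVar φ) (sigmaT φ.maxVar φ)).len ≤ c ^ φ.len := by
  refine ⟨1024 * (n+2)^2, fun φ _ => ⟨?_, ?_, len_translation_le _ φ (maxVar_lt_len φ)⟩⟩
  · exact Set.union_subset (vars_Af _ φ) (vars_sigmaT _ φ)
  · exact ⟨translation_mem_productLogic _,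
      mem_productLogic_of_translation_mem fun _ => mem_vars_le_maxVar⟩

/-- **Theorem 3.3.** Any product `L = T × L₂ × … × Lₙ` (with `L₂, …, Lₙ` Kripke
complete) is exponentially embeddable into its one-variable fragment: the map
`φ ↦ (A → σ(φ))` (with `A`, `σ` defined from `φ`, taking `m = maxVar φ`) sends every
formula `φ` (over the variables `p₁, p₂, …`) to a formula in the single variable `p`
such that `φ ∈ L` iff `A → σ(φ) ∈ L`, and the length of `A → σ(φ)` is bounded by an
exponential function of the length of `φ`. -/
theorem products_with_T_theorem_3_3 (n : ℕ) (Ls : Fin n → Set (MF 1))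
    (hLs : ∀ i, KripkeComplete (Ls i)) :
    ∃ c : ℕ, ∀ φ : MF (n+1), (∀ q ∈ φ.vars, 1 ≤ q) →
      (MF.imp (Af φ.maxVar φ) (sigmaT φ.maxVar φ)).vars ⊆ {0} ∧
      (φ ∈ productLogic (Fin.cases (motive := fun _ => Set (MF 1)) logicT Ls) ↔
        MF.imp (Af φ.maxVar φ) (sigmaT φ.maxVar φ) ∈
          productLogic (Fin.cases (motive := fun _ => Set (MF 1)) logicT Ls)) ∧
      (MF.imp (Af φ.maxVar φ) (sigmaT φ.maxVar φ)).len ≤ c ^ φ.len :=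
  products_with_T_theorem_3_3_general n Ls
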